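/- arXiv:2202.11288 — 4 statements merged into one kernel-verified Lean document; each statement's English description precedes it below -/
import Mathlib

section
/- For each integer l ≥ 1, the trigonometric polynomial f_l(θ) = (2/l) * sum_{j=1}^{l} (2 - 2cos(jθ)) - (2 - 2cos(θ)) is nonnegative for all real θ. -/
/-!
With `x = θ / 2` we have `2 - 2 cos (j θ) = 4 sin² (j x)`, so the claim is
`l sin² x ≤ 2 ∑_{j=1}^l sin² (j x)`. Multiplied by `sin² x`, the sum has the closed form
`2 sin² x ∑_{j=1}^l sin² (j x) = l sin² x - sin x sin (l x) cos ((l + 1) x)`, which reduces the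
claim to `sin x sin (l x) cos ((l + 1) x) ≤ l sin² x cos² x`. When `l sin² x ≥ 1/4` this is AM-GM.
Otherwise `|sin (l x)| ≤ l |sin x|` makes `t = |sin x sin (l x)| ≤ l sin² x < 1/4`, and
`t - t² ≤ l sin² x - (l sin² x)² ≤ l sin² x cos² x`.
-/

open Real Finset

theorem abs_sin_nat_mul_le (n : ℕ) (x : ℝ) : |sin (n * x)| ≤ n * |sin x| := by
  induction n with
  | zero => simp
  | succ n ih =>
    have hcos_x : |sin (n * x) * cos x| ≤ |sin (n * x)| := by
      rw [abs_mul]; exact mul_le_of_le_one_right (abs_nonneg _) (abs_cos_le_one x)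
    have hcos_nx : |cos (n * x) * sin x| ≤ |sin x| := by
      rw [abs_mul]; exact mul_le_of_le_one_left (abs_nonneg _) (abs_cos_le_one _)
    calc |sin ((n + 1 : ℕ) * x)| = |sin (n * x) * cos x + cos (n * x) * sin x| := by
          push_cast; rw [add_mul, one_mul, sin_add]
      _ ≤ |sin (n * x) * cos x| + |cos (n * x) * sin x| := abs_add_le _ _
      _ ≤ (n + 1 : ℕ) * |sin x| := by push_cast; linarith

theorem two_mul_sin_sq_mul_sum_sin_sq (l : ℕ) (x : ℝ) :
    2 * sin x ^ 2 * ∑ j ∈ Icc 1 l, sin (j * x) ^ 2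
      = l * sin x ^ 2 - sin x * sin (l * x) * cos ((l + 1) * x) := by
  induction l with
  | zero => simp
  | succ l ih =>
    rw [sum_Icc_succ_top (Nat.le_add_left 1 l), mul_add, ih]
    push_cast
    simp only [add_mul, one_mul, sin_add, cos_add]
    linear_combination
      (cos (l * x) ^ 2 * sin x ^ 2 + sin x * cos x * sin (l * x) * cos (l * x)) * sin_sq_add_cos_sq x
        + sin x ^ 2 * sin_sq_add_cos_sq (l * x)

theorem sin_mul_sin_nat_mul_mul_cos_le (l : ℕ) (x : ℝ) :
    sin x * sin (l * x) * cos ((l + 1) * x) ≤ l * (sin x * cos x) ^ 2 := by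
  have hcos : cos ((l + 1) * x) = cos (l * x) * cos x - sin (l * x) * sin x := by
    rw [add_mul, one_mul, cos_add]
  rw [hcos]
  set m := l * sin x ^ 2 with hm_def
  rcases le_total (1 / 4) m with hm | hm
  · have hC : cos (l * x) ^ 2 ≤ 4 * m := by nlinarith [cos_sq_le_one (l * x)]
    -- AM-GM, `sin x sin (l x) cos (l x) cos x ≤ (sin x sin (l x))² + (cos x cos (l x))² / 4`
    nlinarith [sq_nonneg (sin x * sin (l * x) - cos x * cos (l * x) / 2),
      mul_le_mul_of_nonneg_left hC (sq_nonneg (cos x))]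
  · set t := |sin x * sin (l * x)| with ht_def
    have ht : t ≤ m := by
      calc t = |sin x| * |sin (l * x)| := abs_mul _ _
        _ ≤ |sin x| * (l * |sin x|) := by gcongr; exact abs_sin_nat_mul_le l x
        _ = m := by rw [hm_def, ← sq_abs (sin x)]; ring
    have hcC : sin x * sin (l * x) * (cos (l * x) * cos x) ≤ t := by
      calc _ ≤ t * |cos (l * x) * cos x| := by rw [ht_def, ← abs_mul]; exact le_abs_self _
        _ ≤ t * 1 := by
          gcongr
          rw [abs_mul]
          exact mul_le_one₀ (abs_cos_le_one _) (abs_nonneg _) (abs_cos_le_one _)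
        _ = t := mul_one t
    have hm_sq : m * sin x ^ 2 ≤ m ^ 2 := by
      have hl_sq : (l : ℝ) ≤ l ^ 2 := by exact_mod_cast Nat.le_self_pow two_ne_zero l
      rw [hm_def]
      nlinarith [mul_le_mul_of_nonneg_right hl_sq (pow_nonneg (sq_nonneg (sin x)) 2)]
    have ht_sq : t ^ 2 = (sin x * sin (l * x)) ^ 2 := sq_abs _
    have hmt : 0 ≤ (m - t) * (1 - m - t) := mul_nonneg (by linarith) (by linarith)
    -- `t - t ^ 2 - m cos² x = -(m - t) (1 - m - t) - (m ^ 2 - m sin² x)`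
    calc sin x * sin (l * x) * (cos (l * x) * cos x - sin (l * x) * sin x)
        = sin x * sin (l * x) * (cos (l * x) * cos x) - t ^ 2 := by rw [ht_sq]; ring
      _ ≤ t - t ^ 2 := by linarith
      _ ≤ m * (1 - sin x ^ 2) := by nlinarith
      _ = l * (sin x * cos x) ^ 2 := by rw [hm_def, mul_pow, cos_sq']; ring

theorem nat_mul_sin_sq_le_two_mul_sum_sin_sq (l : ℕ) (x : ℝ) :
    l * sin x ^ 2 ≤ 2 * ∑ j ∈ Icc 1 l, sin (j * x) ^ 2 := by
  rcases eq_or_ne (sin x) 0 with hs | hs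
  · rw [hs, zero_pow two_ne_zero, mul_zero]
    exact mul_nonneg zero_le_two (sum_nonneg fun j _ => sq_nonneg _)
  · have hs2 : 0 < sin x ^ 2 := by positivity
    refine le_of_mul_le_mul_left ?_ hs2
    have hcos : l * (sin x * cos x) ^ 2 = sin x ^ 2 * (l - l * sin x ^ 2) := by
      rw [mul_pow, cos_sq']; ring
    linarith [two_mul_sin_sq_mul_sum_sin_sq l x, sin_mul_sin_nat_mul_mul_cos_le l x]

/-- For each integer `l ≥ 1`, the trigonometric polynomial
`f_l(θ) = (2/l) ∑_{j=1}^{l} (2 - 2 cos(jθ)) - (2 - 2 cos θ)` is nonnegative. -/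
theorem generating_function_nonneg (l : ℕ) (hl : 1 ≤ l) (θ : ℝ) :
    0 ≤ (2 / (l : ℝ)) * (∑ j ∈ Finset.Icc 1 l, (2 - 2 * Real.cos (j * θ)))
          - (2 - 2 * Real.cos θ) := by
  have hl0 : (0 : ℝ) < l := by exact_mod_cast hl
  have one_sub_cos (y : ℝ) : 2 - 2 * cos y = 4 * sin (y / 2) ^ 2 := by
    have h := cos_two_mul_eq_one_sub (y / 2)
    rw [mul_div_cancel₀ y two_ne_zero] at h
    linarith
  have hterm (j : ℕ) : 2 - 2 * cos (j * θ) = 4 * sin (j * (θ / 2)) ^ 2 := by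
    rw [one_sub_cos, mul_div_assoc]
  rw [sum_congr rfl fun j _ => hterm j, one_sub_cos θ, ← mul_sum, sub_nonneg]
  calc 4 * sin (θ / 2) ^ 2 = 4 / l * (l * sin (θ / 2) ^ 2) := by field_simp
    _ ≤ 4 / l * (2 * ∑ j ∈ Icc 1 l, sin (j * (θ / 2)) ^ 2) := by
      gcongr 4 / l * ?_; exact nat_mul_sin_sq_le_two_mul_sum_sin_sq l (θ / 2)
    _ = _ := by ring
end

section
/- For a symmetric positive definite matrix A with diagonal D, the damped Jacobi smoother S = I − ω D^{-1} A with 0 < ω < 2/η_0, where η_0 ≥ λ_max(D^{-1}A), satisfies ‖S x‖²_A ≤ ‖x‖²_A − η ‖A x‖²_{D^{-1}} for any η ≤ ω(2 − ω η_0). -/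
/-!
With `z = D⁻¹ A x` and `t = ‖A x‖²_{D⁻¹} = ⟪z, A x⟫`, expanding gives
`‖S x‖²_A = ‖x‖²_A - 2 ω t + ω² ‖z‖²_A`. The matrix `D^{1/2} (D⁻¹ A) D^{-1/2} = D^{-1/2} A D^{-1/2}`
is symmetric and similar to `D⁻¹ A`, so its eigenvalues are at most `η₀` and hence
`‖z‖²_A ≤ η₀ ‖z‖²_D = η₀ t`. Therefore `‖S x‖²_A ≤ ‖x‖²_A - ω (2 - ω η₀) t`.
-/

open Matrix

variable {ι : Type*} [Fintype ι]

theorem Matrix.IsHermitian.dotProduct_mulVec_comm {A : Matrix ι ι ℝ} (hA : A.IsHermitian)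
    (x y : ι → ℝ) : x ⬝ᵥ A *ᵥ y = y ⬝ᵥ A *ᵥ x := by
  rw [dotProduct_mulVec, ← mulVec_transpose, ← conjTranspose_eq_transpose_of_trivial, hA.eq,
    dotProduct_comm]

theorem Matrix.IsHermitian.dotProduct_mulVec_sub_smul {A : Matrix ι ι ℝ} (hA : A.IsHermitian)
    (x z : ι → ℝ) (ω : ℝ) :
    (x - ω • z) ⬝ᵥ A *ᵥ (x - ω • z) =
      x ⬝ᵥ A *ᵥ x - 2 * ω * (z ⬝ᵥ A *ᵥ x) + ω ^ 2 * (z ⬝ᵥ A *ᵥ z) := by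
  simp only [mulVec_sub, mulVec_smul, sub_dotProduct, dotProduct_sub, smul_dotProduct,
    dotProduct_smul, smul_eq_mul, hA.dotProduct_mulVec_comm x z]
  ring

theorem Matrix.diagonal_mulVec_dotProduct [DecidableEq ι] (d x y : ι → ℝ) :
    (diagonal d *ᵥ x) ⬝ᵥ y = x ⬝ᵥ diagonal d *ᵥ y := by
  rw [dotProduct_mulVec, ← mulVec_transpose, diagonal_transpose]

theorem Matrix.IsHermitian.posSemidef_smul_one_sub [DecidableEq ι] {M : Matrix ι ι ℝ}
    (hM : M.IsHermitian) {c : ℝ} (hc : ∀ (μ : ℝ) (v : ι → ℝ), v ≠ 0 → M *ᵥ v = μ • v → μ ≤ c) :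
    (c • 1 - M).PosSemidef := by
  have hN : (c • 1 - M).IsHermitian := (isHermitian_one.smul (IsSelfAdjoint.all c)).sub hM
  refine hN.posSemidef_iff_eigenvalues_nonneg.mpr fun i => ?_
  have hv : ⇑(hN.eigenvectorBasis i) ≠ 0 := by
    simpa using hN.eigenvectorBasis.orthonormal.ne_zero i
  have hMv :
      M *ᵥ hN.eigenvectorBasis i = (c - hN.eigenvalues i) • ⇑(hN.eigenvectorBasis i) := by
    have h := hN.mulVec_eigenvectorBasis i
    rw [sub_mulVec, smul_mulVec, one_mulVec] at h
    rw [sub_smul, ← h, sub_sub_cancel]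
  simpa using hc _ _ hv hMv

theorem Matrix.IsHermitian.diagonal_mulVec_dotProduct_mulVec_le [DecidableEq ι]
    {A : Matrix ι ι ℝ} (hA : A.IsHermitian) {d : ι → ℝ} (hd : ∀ i, 0 < d i) {c : ℝ}
    (hc : ∀ (μ : ℝ) (x : ι → ℝ), x ≠ 0 → (diagonal d * A) *ᵥ x = μ • x → μ ≤ c) (y : ι → ℝ) :
    (diagonal d *ᵥ y) ⬝ᵥ A *ᵥ (diagonal d *ᵥ y) ≤ c * (y ⬝ᵥ diagonal d *ᵥ y) := by
  set E := diagonal fun i => √(d i)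
  have hEE : E * E = diagonal d := by
    rw [diagonal_mul_diagonal]
    exact congrArg diagonal (funext fun i => Real.mul_self_sqrt (hd i).le)
  have hEH : Eᴴ = E := by simp [E]
  have hEAE : (E * A * E).IsHermitian := by
    simpa only [hEH] using isHermitian_conjTranspose_mul_mul E hA
  -- `E *ᵥ ·` maps eigenvectors of `E * A * E` to eigenvectors of `diagonal d * A`.
  have hM : (c • 1 - E * A * E).PosSemidef := by
    refine hEAE.posSemidef_smul_one_sub fun μ v hv hMv => hc μ (E *ᵥ v) ?_ ?_
    · exact fun h => hv (funext fun i => by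
        simpa [E, mulVec_diagonal, (Real.sqrt_pos.2 (hd i)).ne'] using congrFun h i)
    · rw [← hEE, mulVec_mulVec, show E * E * A * E = E * (E * A * E) by
        simp only [Matrix.mul_assoc], ← mulVec_mulVec, hMv, mulVec_smul]
  have h := (hM.conjTranspose_mul_mul_same E).dotProduct_mulVec_nonneg y
  have hconj : Eᴴ * (c • 1 - E * A * E) * E = c • diagonal d - diagonal d * A * diagonal d := by
    rw [hEH, Matrix.mul_sub, Matrix.sub_mul, Matrix.mul_smul, Matrix.smul_mul, Matrix.mul_one,
      hEE, ← hEE]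
    simp only [Matrix.mul_assoc]
  rw [hconj, sub_mulVec, dotProduct_sub, smul_mulVec, dotProduct_smul, ← mulVec_mulVec,
    ← mulVec_mulVec, star_trivial, smul_eq_mul, sub_nonneg] at h
  simpa only [diagonal_mulVec_dotProduct] using h

theorem damped_jacobi_smoothing_general {n : ℕ}
    (A : Matrix (Fin n) (Fin n) ℝ) (hA : A.PosDef)
    (Dinv : Matrix (Fin n) (Fin n) ℝ) (hDinv : Dinv = Matrix.diagonal fun i => (A i i)⁻¹)
    (η₀ ω η : ℝ)
    (hη₀ : ∀ (μ : ℝ) (x : Fin n → ℝ), x ≠ 0 → (Dinv * A) *ᵥ x = μ • x → μ ≤ η₀)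
    (hη : η ≤ ω * (2 - ω * η₀))
    (S : Matrix (Fin n) (Fin n) ℝ) (hS : S = 1 - ω • (Dinv * A)) :
    ∀ x : Fin n → ℝ,
      (S *ᵥ x) ⬝ᵥ A *ᵥ (S *ᵥ x) ≤ x ⬝ᵥ A *ᵥ x - η * ((A *ᵥ x) ⬝ᵥ Dinv *ᵥ (A *ᵥ x)) := by
  intro x
  subst hDinv hS
  have hd : ∀ i, 0 < (A i i)⁻¹ := fun i => inv_pos.2 hA.diag_pos
  set z := diagonal (fun i => (A i i)⁻¹) *ᵥ A *ᵥ x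
  set t := (A *ᵥ x) ⬝ᵥ diagonal (fun i => (A i i)⁻¹) *ᵥ A *ᵥ x
  have hSx : (1 - ω • (diagonal (fun i => (A i i)⁻¹) * A)) *ᵥ x = x - ω • z := by
    rw [sub_mulVec, one_mulVec, smul_mulVec, ← mulVec_mulVec]
  have hzAx : z ⬝ᵥ A *ᵥ x = t := diagonal_mulVec_dotProduct _ _ _
  have hzAz : z ⬝ᵥ A *ᵥ z ≤ η₀ * t :=
    hA.isHermitian.diagonal_mulVec_dotProduct_mulVec_le hd hη₀ _
  have ht : 0 ≤ t := (PosSemidef.diagonal fun i => (hd i).le).dotProduct_mulVec_nonneg _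
  rw [hSx, hA.isHermitian.dotProduct_mulVec_sub_smul, hzAx]
  nlinarith [mul_le_mul_of_nonneg_left hzAz (sq_nonneg ω), mul_le_mul_of_nonneg_right hη ht]

/-- Smoothing property of damped Jacobi: for a symmetric positive definite `A` with
diagonal `D`, the smoother `S = I - ω D⁻¹ A` with `0 < ω < 2/η₀`, where
`η₀ ≥ λ_max(D⁻¹A)`, satisfies `‖S x‖²_A ≤ ‖x‖²_A - η ‖A x‖²_{D⁻¹}` for any
`η ≤ ω (2 - ω η₀)`. -/
theorem damped_jacobi_smoothing {n : ℕ}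
    (A : Matrix (Fin n) (Fin n) ℝ) (hA : A.PosDef)
    (Dinv : Matrix (Fin n) (Fin n) ℝ) (hDinv : Dinv = Matrix.diagonal fun i => (A i i)⁻¹)
    (η₀ ω η : ℝ)
    (hη₀ : ∀ (μ : ℝ) (x : Fin n → ℝ), x ≠ 0 → (Dinv * A) *ᵥ x = μ • x → μ ≤ η₀)
    (hω0 : 0 < ω) (hω2 : ω < 2 / η₀)
    (hη : η ≤ ω * (2 - ω * η₀))
    (S : Matrix (Fin n) (Fin n) ℝ) (hS : S = 1 - ω • (Dinv * A)) :
    ∀ x : Fin n → ℝ,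
      (S *ᵥ x) ⬝ᵥ A *ᵥ (S *ᵥ x) ≤ x ⬝ᵥ A *ᵥ x - η * ((A *ᵥ x) ⬝ᵥ Dinv *ᵥ (A *ᵥ x)) :=
  damped_jacobi_smoothing_general A hA Dinv hDinv η₀ ω η hη₀ hη S hS
end

section
/- For a symmetric positive definite matrix A with diagonal D, the Jacobi iteration (S = I − D^{-1}A) converges if and only if 2D − A is positive definite. -/
/-!
`S x = μ x` is the generalized eigenproblem `A x = (1 - μ) D x`, equivalently
`(2D - A) x = (1 + μ) D x`. Pairing either equation with `x` writes `1 - μ`, resp. `1 + μ`, as a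
ratio of two quadratic forms; when `A`, `D` and `2D - A` are positive definite both ratios are
positive reals, so `μ ∈ (-1, 1)`. Conversely, writing `D = Yᴴ Y` with `Y` invertible turns the
pencil `(2D - A, D)` into the Hermitian matrix `Y⁻ᴴ (2D - A) Y⁻¹`, whose eigenvalues are the
numbers `1 + μ` for real eigenvalues `μ` of `S`; these are positive when `|μ| < 1`.
-/

open Matrix
open scoped ComplexOrder

theorem RCLike.norm_lt_one_of_neg_one_lt_of_lt_one {K : Type*} [RCLike K] {z : K}
    (h₁ : -1 < z) (h₂ : z < 1) : ‖z‖ < 1 := by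
  rw [RCLike.lt_iff_re_im] at h₁ h₂
  simp only [map_neg, one_re, neg_zero, one_im] at h₁ h₂
  have hz : z = ((re z : ℝ) : K) := RCLike.ext (by simp) (by simp [h₂.2])
  rw [hz, RCLike.norm_ofReal]
  exact abs_lt.mpr ⟨h₁.1, h₂.1⟩

namespace Matrix

variable {n 𝕜 : Type*} [Fintype n] [RCLike 𝕜]

theorem PosDef.pos_of_mulVec_eq_smul_mulVec {A D : Matrix n n 𝕜} (hA : A.PosDef)
    (hD : D.PosDef) {x : n → 𝕜} (hx : x ≠ 0) {c : 𝕜} (h : A *ᵥ x = c • D *ᵥ x) : 0 < c := by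
  have hAx := hA.dotProduct_mulVec_pos hx
  rw [h, dotProduct_smul, smul_eq_mul] at hAx
  exact (pos_iff_pos_of_mul_pos hAx).mpr (hD.dotProduct_mulVec_pos hx)

variable [DecidableEq n]

open scoped MatrixOrder in
theorem posDef_of_forall_mulVec_eq_smul_mulVec_pos {M D : Matrix n n 𝕜} (hM : M.IsHermitian)
    (hD : D.PosDef) (h : ∀ (c : ℝ) (x : n → 𝕜), x ≠ 0 → M *ᵥ x = (c : 𝕜) • D *ᵥ x → 0 < c) :
    M.PosDef := by
  obtain ⟨Y, hY, rfl⟩ :=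
    CStarAlgebra.isStrictlyPositive_iff_eq_star_mul_self.mp hD.isStrictlyPositive
  have hYdet := (isUnit_iff_isUnit_det Y).mp hY
  generalize hN_def : star Y⁻¹ * M * Y⁻¹ = N
  have hMN : M = star Y * N * Y := by
    rw [← hN_def, ← mul_assoc, ← mul_assoc, ← star_mul, nonsing_inv_mul Y hYdet, star_one, one_mul,
      mul_assoc, nonsing_inv_mul Y hYdet, mul_one]
  have hN : N.IsHermitian := by
    simpa [← hN_def, star_eq_conjTranspose] using isHermitian_conjTranspose_mul_mul Y⁻¹ hM
  rw [hMN, hY.posDef_star_left_conjugate_iff, hN.posDef_iff_eigenvalues_pos]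
  intro i
  set v : n → 𝕜 := ⇑(hN.eigenvectorBasis i)
  have hv : v ≠ 0 := by
    simpa [v] using hN.eigenvectorBasis.orthonormal.ne_zero i
  have hYv : Y *ᵥ (Y⁻¹ *ᵥ v) = v := by
    rw [mulVec_mulVec, mul_nonsing_inv Y hYdet, one_mulVec]
  have hNv : N *ᵥ v = (hN.eigenvalues i : 𝕜) • v := by
    rw [hN.mulVec_eigenvectorBasis, RCLike.real_smul_eq_coe_smul (K := 𝕜)]
  refine h _ (Y⁻¹ *ᵥ v) ?_ ?_
  · intro h0
    rw [h0, mulVec_zero] at hYv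
    exact hv hYv.symm
  · rw [hMN, ← mulVec_mulVec, ← mulVec_mulVec, ← mulVec_mulVec, hYv, hNv, mulVec_smul]

open scoped MatrixOrder in
theorem PosDef.map_ofReal {A : Matrix n n ℝ} (hA : A.PosDef) :
    (A.map Complex.ofReal).PosDef := by
  obtain ⟨Y, hY, rfl⟩ :=
    CStarAlgebra.isStrictlyPositive_iff_eq_star_mul_self.mp hA.isStrictlyPositive
  have hY' : IsUnit (Y.map Complex.ofReal) := hY.map Complex.ofRealHom.mapMatrix
  convert hY'.posDef_star_left_conjugate_iff.mpr PosDef.one using 1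
  ext i j
  simp [mul_apply]

section Jacobi

variable {K L : Type*} [Field K] [Field L]

def jacobiMatrix (A : Matrix n n K) : Matrix n n K :=
  1 - diagonal (fun i => (A i i)⁻¹) * A

theorem map_jacobiMatrix (f : K →+* L) (A : Matrix n n K) :
    (jacobiMatrix A).map f = jacobiMatrix (A.map f) := by
  simp [jacobiMatrix, Matrix.map_sub, Matrix.map_mul, diagonal_map, map_inv₀]

theorem jacobiMatrix_mulVec_eq_smul_iff {A : Matrix n n K} (hA : ∀ i, A i i ≠ 0) (x : n → K)
    (μ : K) :
    jacobiMatrix A *ᵥ x = μ • x ↔ A *ᵥ x = (1 - μ) • (diagonal fun i => A i i) *ᵥ x := by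
  simp only [jacobiMatrix, sub_mulVec, one_mulVec, funext_iff, Pi.sub_apply, Pi.smul_apply,
    mulVec_diagonal, ← mulVec_mulVec, smul_eq_mul]
  refine forall_congr' fun i => ?_
  field_simp [hA i]
  constructor <;> intro h <;> linear_combination -h

end Jacobi

theorem norm_lt_one_of_jacobiMatrix_mulVec_eq_smul {A : Matrix n n 𝕜} (hA : A.PosDef)
    (hJ : ((2 : 𝕜) • diagonal (fun i => A i i) - A).PosDef) {x : n → 𝕜} (hx : x ≠ 0) {μ : 𝕜}
    (h : jacobiMatrix A *ᵥ x = μ • x) : ‖μ‖ < 1 := by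
  have hD : (diagonal fun i => A i i).PosDef := posDef_diagonal_iff.mpr fun i => hA.diag_pos
  have hAx := (jacobiMatrix_mulVec_eq_smul_iff (fun i => hA.diag_pos.ne') x μ).mp h
  have hJx : ((2 : 𝕜) • diagonal (fun i => A i i) - A) *ᵥ x =
      (1 + μ) • (diagonal fun i => A i i) *ᵥ x := by
    rw [sub_mulVec, smul_mulVec, hAx]
    module
  have h₁ := hA.pos_of_mulVec_eq_smul_mulVec hD hx hAx
  have h₂ := hJ.pos_of_mulVec_eq_smul_mulVec hD hx hJx
  exact RCLike.norm_lt_one_of_neg_one_lt_of_lt_one (by linear_combination h₂) (sub_pos.mp h₁)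

theorem posDef_two_smul_diagonal_sub_of_forall_abs_lt_one {A : Matrix n n 𝕜}
    (hA : A.IsHermitian) (hdiag : ∀ i, 0 < A i i)
    (h : ∀ (μ : ℝ) (x : n → 𝕜), x ≠ 0 → jacobiMatrix A *ᵥ x = (μ : 𝕜) • x → |μ| < 1) :
    ((2 : 𝕜) • diagonal (fun i => A i i) - A).PosDef := by
  have hD : (diagonal fun i => A i i).PosDef := posDef_diagonal_iff.mpr hdiag
  refine posDef_of_forall_mulVec_eq_smul_mulVec_pos ((hD.smul two_pos).isHermitian.sub hA) hD
    fun c x hx hcx => ?_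
  have hAx : A *ᵥ x = (1 - ((c - 1 : ℝ) : 𝕜)) • (diagonal fun i => A i i) *ᵥ x := by
    rw [sub_mulVec, smul_mulVec] at hcx
    push_cast
    linear_combination (norm := module) -hcx
  have := h (c - 1) x hx ((jacobiMatrix_mulVec_eq_smul_iff (fun i => (hdiag i).ne') x _).mpr hAx)
  linarith [(abs_lt.mp this).1]

end Matrix

theorem jacobi_converges_iff_general {n : ℕ}
    (A : Matrix (Fin n) (Fin n) ℝ) (hA : A.PosDef)
    (D : Matrix (Fin n) (Fin n) ℝ) (hD : D = Matrix.diagonal fun i => A i i)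
    (S : Matrix (Fin n) (Fin n) ℝ)
    (hS : S = 1 - (Matrix.diagonal fun i => (A i i)⁻¹) * A) :
    (∀ (μ : ℂ) (x : Fin n → ℂ), x ≠ 0 →
        (S.map (Complex.ofReal)) *ᵥ x = μ • x → ‖μ‖ < 1)
      ↔ ((2 : ℝ) • D - A).PosDef := by
  change S = jacobiMatrix A at hS
  subst hS hD
  constructor
  · intro hconv
    refine posDef_two_smul_diagonal_sub_of_forall_abs_lt_one hA.isHermitian (fun i => hA.diag_pos)
      fun μ x hx hμ => ?_
    have hμ' : (jacobiMatrix A).map Complex.ofReal *ᵥ (Complex.ofReal ∘ x) =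
        (μ : ℂ) • (Complex.ofReal ∘ x) := by
      funext i
      exact (RingHom.map_mulVec Complex.ofRealHom _ x i).symm.trans (by simp [hμ])
    simpa using hconv μ _ (by simpa [funext_iff] using hx) hμ'
  · intro hJ μ x hx hμ
    refine norm_lt_one_of_jacobiMatrix_mulVec_eq_smul hA.map_ofReal ?_ hx
      (by convert hμ using 2; exact (map_jacobiMatrix Complex.ofRealHom A).symm)
    have hmap : ((2 : ℝ) • diagonal (fun i => A i i) - A).map Complex.ofReal =
        (2 : ℂ) • diagonal (fun i => A.map Complex.ofReal i i) - A.map Complex.ofReal := by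
      ext i j
      by_cases hij : i = j <;> simp [hij]
    exact hmap ▸ hJ.map_ofReal

/-- For a symmetric positive definite `A` with diagonal part `D`, the Jacobi
iteration `S = I - D⁻¹A` converges (every complex eigenvalue of `S` has modulus
`< 1`) if and only if `2D - A` is positive definite. -/
theorem jacobi_converges_iff {n : ℕ}
    (A : Matrix (Fin n) (Fin n) ℝ) (hA : A.PosDef)
    (D : Matrix (Fin n) (Fin n) ℝ) (hD : D = Matrix.diagonal fun i => A i i)
    (hDpos : ∀ i, 0 < A i i)
    (S : Matrix (Fin n) (Fin n) ℝ)
    (hS : S = 1 - (Matrix.diagonal fun i => (A i i)⁻¹) * A) :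
    (∀ (μ : ℂ) (x : Fin n → ℂ), x ≠ 0 →
        (S.map (Complex.ofReal)) *ᵥ x = μ • x → ‖μ‖ < 1)
      ↔ ((2 : ℝ) • D - A).PosDef :=
  jacobi_converges_iff_general A hA D hD S hS
end

section
/- For the standard linear interpolation prolongation, the interpolation error of injecting even-indexed values satisfies, for every x ∈ R^{2m+1}: sum over odd indices i of (x_i − (x_{i-1} + x_{i+1})/2)² ≤ (1/2) x^T L x, where L = tridiag(−1, 2, −1) of size (2m+1)×(2m+1). -/
/-!
Summation by parts turns `xᵀ L x` into `∑ᵢ (x_{i+1} - x_i)²`, which splits over the coarse cells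
`[2j, 2j+2]`. On each cell the identity
`(b - a)² + (c - b)² = 2 (b - (a + c)/2)² + (c - a)²/2`
bounds the squared interpolation error at the midpoint by half the two squared increments.
-/

open Finset

def dirichletLaplacian (R : Type*) [Ring R] (i k : ℕ) : R :=
  if i = k then 2 else if |(i : ℤ) - (k : ℤ)| = 1 then -1 else 0

section

variable {R : Type*}

theorem dirichletLaplacian_eq_ite [Ring R] {i : ℕ} (hi : 1 ≤ i) (k : ℕ) :
    dirichletLaplacian R i k =
      2 * (if k = i then 1 else 0) - (if k = i - 1 then 1 else 0) - (if k = i + 1 then 1 else 0) := by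
  have habs : |(i : ℤ) - (k : ℤ)| = 1 ↔ k = i - 1 ∨ k = i + 1 := by
    rw [abs_eq zero_le_one]; omega
  unfold dirichletLaplacian
  simp only [habs]
  split_ifs <;> first | omega | norm_num

theorem sum_dirichletLaplacian_mul [CommRing R] {n : ℕ} {x : ℕ → R} (hx₀ : x 0 = 0)
    (hxn : x (n + 1) = 0) {i : ℕ} (hi : i ∈ Icc 1 n) :
    ∑ k ∈ Icc 1 n, dirichletLaplacian R i k * x k = 2 * x i - x (i - 1) - x (i + 1) := by
  rw [mem_Icc] at hi
  have hpick : ∀ c ≤ n + 1, ∑ k ∈ Icc 1 n, (if k = c then 1 else 0) * x k = x c := by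
    intro c hc
    simp only [ite_mul, one_mul, zero_mul, sum_ite_eq', mem_Icc]
    split_ifs
    · rfl
    · obtain rfl | rfl : c = 0 ∨ c = n + 1 := by omega
      exacts [hx₀.symm, hxn.symm]
  simp only [dirichletLaplacian_eq_ite hi.1, sub_mul, mul_assoc, sum_sub_distrib, ← mul_sum]
  rw [hpick i (by omega), hpick (i - 1) (by omega), hpick (i + 1) (by omega)]

theorem sum_mul_second_diff [CommRing R] (x : ℕ → R) (n : ℕ) :
    ∑ i ∈ Icc 1 n, x i * (2 * x i - x (i - 1) - x (i + 1)) =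
      ∑ i ∈ range (n + 1), (x (i + 1) - x i) ^ 2 - (x (n + 1) - x n) * x (n + 1)
        + (x 1 - x 0) * x 0 := by
  induction n with
  | zero => rw [Icc_eq_empty (by omega), sum_empty, sum_range_one]; ring
  | succ n ih =>
    rw [sum_Icc_succ_top (by omega), ih, sum_range_succ _ (n + 1)]
    simp only [Nat.add_sub_cancel]
    ring

theorem sum_mul_dirichletLaplacian_mul [CommRing R] {n : ℕ} {x : ℕ → R} (hx₀ : x 0 = 0)
    (hxn : x (n + 1) = 0) :
    ∑ i ∈ Icc 1 n, ∑ k ∈ Icc 1 n, x i * dirichletLaplacian R i k * x k =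
      ∑ i ∈ range (n + 1), (x (i + 1) - x i) ^ 2 := by
  calc ∑ i ∈ Icc 1 n, ∑ k ∈ Icc 1 n, x i * dirichletLaplacian R i k * x k
      = ∑ i ∈ Icc 1 n, x i * (2 * x i - x (i - 1) - x (i + 1)) := by
        refine sum_congr rfl fun i hi => ?_
        simp only [mul_assoc, ← mul_sum, sum_dirichletLaplacian_mul hx₀ hxn hi]
    _ = ∑ i ∈ range (n + 1), (x (i + 1) - x i) ^ 2 := by
        rw [sum_mul_second_diff, hx₀, hxn]; ring

theorem Finset.sum_range_two_mul [AddCommMonoid R] (f : ℕ → R) (N : ℕ) :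
    ∑ i ∈ range (2 * N), f i = ∑ j ∈ range N, (f (2 * j) + f (2 * j + 1)) := by
  induction N with
  | zero => simp
  | succ N ih => rw [Nat.mul_succ, sum_range_succ, sum_range_succ, sum_range_succ, ih, add_assoc]

end

theorem sq_sub_midpoint_le (a b c : ℝ) :
    (b - (a + c) / 2) ^ 2 ≤ ((b - a) ^ 2 + (c - b) ^ 2) / 2 := by
  nlinarith [sq_nonneg (c - a)]

theorem interpolation_error_bound_general (m : ℕ) (x : ℕ → ℝ)
    (hx0 : x 0 = 0) (hxend : x (2 * m + 2) = 0) :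
    ∑ j ∈ Finset.range (m + 1), (x (2 * j + 1) - (x (2 * j) + x (2 * j + 2)) / 2) ^ 2
      ≤ (1 / 2) * ∑ i ∈ Finset.Icc 1 (2 * m + 1), ∑ k ∈ Finset.Icc 1 (2 * m + 1),
          x i * (if i = k then (2 : ℝ) else if |(i : ℤ) - (k : ℤ)| = 1 then -1 else 0) * x k := by
  calc _ ≤ ∑ j ∈ range (m + 1),
        ((x (2 * j + 1) - x (2 * j)) ^ 2 + (x (2 * j + 2) - x (2 * j + 1)) ^ 2) / 2 :=
        sum_le_sum fun j _ => sq_sub_midpoint_le _ _ _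
    _ = (1 / 2) * ∑ i ∈ range (2 * m + 1 + 1), (x (i + 1) - x i) ^ 2 := by
        rw [show 2 * m + 1 + 1 = 2 * (m + 1) by ring, sum_range_two_mul, mul_sum]
        exact sum_congr rfl fun j _ => by ring
    _ = (1 / 2) * ∑ i ∈ Icc 1 (2 * m + 1), ∑ k ∈ Icc 1 (2 * m + 1),
          x i * dirichletLaplacian ℝ i k * x k := by
        rw [sum_mul_dirichletLaplacian_mul hx0 hxend]

/-- Interpolation error bound for linear interpolation of even-indexed values:
for `n = 2m + 1` and `L = tridiag(-1, 2, -1)` (indices `1, …, n`, with the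
convention `x_0 = x_{2m+2} = 0`),
`∑_{j=0}^{m} (x_{2j+1} - (x_{2j} + x_{2j+2})/2)² ≤ (1/2) xᵀ L x`. -/
theorem interpolation_error_bound (m : ℕ) (hm : 1 ≤ m) (x : ℕ → ℝ)
    (hx0 : x 0 = 0) (hxend : x (2 * m + 2) = 0) :
    ∑ j ∈ Finset.range (m + 1), (x (2 * j + 1) - (x (2 * j) + x (2 * j + 2)) / 2) ^ 2
      ≤ (1 / 2) * ∑ i ∈ Finset.Icc 1 (2 * m + 1), ∑ k ∈ Finset.Icc 1 (2 * m + 1),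
          x i * (if i = k then (2 : ℝ) else if |(i : ℤ) - (k : ℤ)| = 1 then -1 else 0) * x k :=
  interpolation_error_bound_general m x hx0 hxend
end
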